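/- arXiv:2003.12106 — 2 statements merged into one kernel-verified Lean document; each statement's English description precedes it below -/
import Mathlib

section
/- Suppose Verify is sound and complete. Then: (1) if NoNegatives I = CounterExample S, then either (S ≠ ∅ and every v ∈ S satisfies I v and ¬ φ[τc] vm v), or (every v ∈ S satisfies I v and there exists a set V with I ▷ I ⊢ vm : τm ⇝ (S, V)); and (2) if NoNegatives I = Valid, then I ▷ I ⊢ vm : τm ⇝ Valid. -/
/-!  Formalization of the core calculus and definitions from
"Data-Driven Inference of Representation Invariants". -/

namespace RepInv

/-- Types: base type β, the abstract type α, products, and functions. -/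
inductive Ty : Type
  | base : Ty
  | abs : Ty
  | prod : Ty → Ty → Ty
  | arrow : Ty → Ty → Ty

/-- 0-order types: σ ::= β | α | σ×σ. -/
inductive Ty.IsZero : Ty → Prop
  | base : Ty.IsZero .base
  | abs : Ty.IsZero .abs
  | prod {σ₁ σ₂ : Ty} : Ty.IsZero σ₁ → Ty.IsZero σ₂ → Ty.IsZero (.prod σ₁ σ₂)

/-- 1st-order types: τ ::= σ | σ→τ | τ×τ. -/
inductive Ty.IsFirst : Ty → Prop
  | zero {σ : Ty} : Ty.IsZero σ → Ty.IsFirst σ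
  | arrow {σ₁ τ₂ : Ty} : Ty.IsZero σ₁ → Ty.IsFirst τ₂ → Ty.IsFirst (.arrow σ₁ τ₂)
  | prod {τ₁ τ₂ : Ty} : Ty.IsFirst τ₁ → Ty.IsFirst τ₂ → Ty.IsFirst (.prod τ₁ τ₂)

/-- Substitution of the concrete type `τc` for the abstract type α: τ[α↦τc]. -/
def Ty.substAbs : Ty → Ty → Ty
  | .base, _ => .base
  | .abs, τc => τc
  | .prod τ₁ τ₂, τc => .prod (τ₁.substAbs τc) (τ₂.substAbs τc)
  | .arrow τ₁ τ₂, τc => .arrow (τ₁.substAbs τc) (τ₂.substAbs τc)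

/-- A type is closed (concrete) iff it does not mention the abstract type α. -/
def Ty.Closed : Ty → Prop
  | .base => True
  | .abs => False
  | .prod τ₁ τ₂ => τ₁.Closed ∧ τ₂.Closed
  | .arrow τ₁ τ₂ => τ₁.Closed ∧ τ₂.Closed

/-- Expressions (with de Bruijn indices): variables, base constants `w`,
pairs, lambdas, projections and applications. -/
inductive Exp : Type
  | var : Nat → Exp
  | const : Nat → Exp
  | pair : Exp → Exp → Exp
  | lam : Ty → Exp → Exp
  | proj : Bool → Exp → Exp
  | app : Exp → Exp → Exp

/-- Values v ::= w | (v₁,v₂) | λx:σ.e. -/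
inductive Exp.IsValue : Exp → Prop
  | const {w : Nat} : Exp.IsValue (.const w)
  | pair {v₁ v₂ : Exp} : Exp.IsValue v₁ → Exp.IsValue v₂ → Exp.IsValue (.pair v₁ v₂)
  | lam {σ : Ty} {e : Exp} : Exp.IsValue (.lam σ e)

/-- Substitution of a closed expression `s` for variable `k`. -/
def Exp.subst : Exp → Nat → Exp → Exp
  | .var n, k, s => if n = k then s else if k < n then .var (n - 1) else .var n
  | .const w, _, _ => .const w
  | .pair e₁ e₂, k, s => .pair (e₁.subst k s) (e₂.subst k s)
  | .lam σ e, k, s => .lam σ (e.subst (k + 1) s)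
  | .proj b e, k, s => .proj b (e.subst k s)
  | .app e₁ e₂, k, s => .app (e₁.subst k s) (e₂.subst k s)

/-- The typing judgement Γ ⊢ e : τ. -/
inductive HasType : List Ty → Exp → Ty → Prop
  | var {Γ : List Ty} {n : Nat} {τ : Ty} : Γ[n]? = some τ → HasType Γ (.var n) τ
  | const {Γ : List Ty} {w : Nat} : HasType Γ (.const w) .base
  | pair {Γ : List Ty} {e₁ e₂ : Exp} {τ₁ τ₂ : Ty} :
      HasType Γ e₁ τ₁ → HasType Γ e₂ τ₂ → HasType Γ (.pair e₁ e₂) (.prod τ₁ τ₂)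
  | lam {Γ : List Ty} {σ τ : Ty} {e : Exp} :
      HasType (σ :: Γ) e τ → HasType Γ (.lam σ e) (.arrow σ τ)
  | projl {Γ : List Ty} {e : Exp} {τ₁ τ₂ : Ty} :
      HasType Γ e (.prod τ₁ τ₂) → HasType Γ (.proj false e) τ₁
  | projr {Γ : List Ty} {e : Exp} {τ₁ τ₂ : Ty} :
      HasType Γ e (.prod τ₁ τ₂) → HasType Γ (.proj true e) τ₂
  | app {Γ : List Ty} {e₁ e₂ : Exp} {τ₁ τ₂ : Ty} :
      HasType Γ e₁ (.arrow τ₁ τ₂) → HasType Γ e₂ τ₁ → HasType Γ (.app e₁ e₂) τ₂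

/-- Big-step call-by-value evaluation e ⇓ v. -/
inductive Eval : Exp → Exp → Prop
  | const {w : Nat} : Eval (.const w) (.const w)
  | lam {σ : Ty} {e : Exp} : Eval (.lam σ e) (.lam σ e)
  | pair {e₁ e₂ v₁ v₂ : Exp} :
      Eval e₁ v₁ → Eval e₂ v₂ → Eval (.pair e₁ e₂) (.pair v₁ v₂)
  | projl {e v₁ v₂ : Exp} : Eval e (.pair v₁ v₂) → Eval (.proj false e) v₁
  | projr {e v₁ v₂ : Exp} : Eval e (.pair v₁ v₂) → Eval (.proj true e) v₂
  | app {e₁ e₂ e v₂ v : Exp} {σ : Ty} :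
      Eval e₁ (.lam σ e) → Eval e₂ v₂ → Eval (e.subst 0 v₂) v → Eval (.app e₁ e₂) v

/-- Conditional inductiveness: `Cond τc τ P Q v` formalizes
`P ▷ Q ⊢ v : τ ⇝ Valid`, where `P` and `Q` are predicates on values of the
concrete type `τc`.  It is defined by recursion on the (first-order) type τ:
(I-B) at β the value is a base constant; (I-A) at α the value is a closed
value of type τc satisfying Q; (I-Prod) products componentwise; (I-Fun) at
σ₁→τ₂ the value is well typed at the substituted type and maps any argument
related with the roles of P and Q swapped to a related result. -/
def Cond (τc : Ty) : Ty → (Exp → Prop) → (Exp → Prop) → Exp → Prop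
  | .base, _, _, v => ∃ w, v = Exp.const w
  | .abs, _, Q, v => HasType [] v τc ∧ Q v
  | .prod τ₁ τ₂, P, Q, v =>
      ∃ v₁ v₂, v = Exp.pair v₁ v₂ ∧ Cond τc τ₁ P Q v₁ ∧ Cond τc τ₂ P Q v₂
  | .arrow σ₁ τ₂, P, Q, v =>
      HasType [] v ((Ty.arrow σ₁ τ₂).substAbs τc) ∧
      ∀ v₁ v₂, Cond τc σ₁ Q P v₁ → Eval (.app v v₁) v₂ → Cond τc τ₂ P Q v₂

/-- `CollectV τc σ v S`: CollectV(σ, v) is defined and equals the set S. -/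
inductive CollectV (τc : Ty) : Ty → Exp → Set Exp → Prop
  | base {w : Nat} : CollectV τc .base (.const w) ∅
  | abs {v : Exp} : HasType [] v τc → CollectV τc .abs v {v}
  | prod {σ₁ σ₂ : Ty} {v₁ v₂ : Exp} {S₁ S₂ : Set Exp} :
      CollectV τc σ₁ v₁ S₁ → CollectV τc σ₂ v₂ S₂ →
      CollectV τc (.prod σ₁ σ₂) (.pair v₁ v₂) (S₁ ∪ S₂)

/-- The refutation relation: `Refute τc P Q v τ S V` formalizes
`P ▷ Q ⊢ v : τ ⇝ (S, V)`, producing counterexample witness sets S and V. -/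
inductive Refute (τc : Ty) (P Q : Exp → Prop) : Exp → Ty → Set Exp → Set Exp → Prop
  | abs {v : Exp} : HasType [] v τc → ¬ Q v → Refute τc P Q v .abs ∅ {v}
  | prodl {v₁ v₂ : Exp} {τ₁ τ₂ : Ty} {S V : Set Exp} :
      Refute τc P Q v₁ τ₁ S V → HasType [] v₂ (τ₂.substAbs τc) →
      Refute τc P Q (.pair v₁ v₂) (.prod τ₁ τ₂) S V
  | prodr {v₁ v₂ : Exp} {τ₁ τ₂ : Ty} {S V : Set Exp} :
      HasType [] v₁ (τ₁.substAbs τc) → Refute τc P Q v₂ τ₂ S V →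
      Refute τc P Q (.pair v₁ v₂) (.prod τ₁ τ₂) S V
  | fn {v v₁ v₂ : Exp} {σ₁ τ₂ : Ty} {S V S₁ : Set Exp} :
      HasType [] v ((Ty.arrow σ₁ τ₂).substAbs τc) →
      Cond τc σ₁ Q P v₁ → Eval (.app v v₁) v₂ →
      Refute τc P Q v₂ τ₂ S V → CollectV τc σ₁ v₁ S₁ →
      Refute τc P Q v (.arrow σ₁ τ₂) (S₁ ∪ S) V

/-- A module implementation M = ⟨τc, vm⟩ for the interface F = ∃α.τm:
a closed concrete type τc together with operations vm of type τm[α↦τc]. -/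
structure Module where
  τc : Ty
  τm : Ty
  vm : Exp
  closed : τc.Closed
  first : τm.IsFirst
  wt : HasType [] vm (τm.substAbs τc)

/-- `v` is τ-constructible using M: there is a client f : ∀α. τm → τ
(an expression typed with α held abstract) with f[τc] vm ⇓ v. -/
def Constructible (M : Module) (v : Exp) (τ : Ty) : Prop :=
  ∃ f : Exp, HasType [] f (.arrow M.τm τ) ∧ Eval (.app f M.vm) v

/-- A set is α-constructible iff each of its elements is. -/
def ConstructibleSet (M : Module) (S : Set Exp) : Prop :=
  ∀ v ∈ S, Constructible M v .abs

/-- A predicate is α-constructible iff every value satisfying it is. -/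
def ConstructiblePred (M : Module) (p : Exp → Prop) : Prop :=
  ∀ v, p v → Constructible M v .abs

/-- A specification is modeled semantically by the predicate
`φ v` ≡ “φ[τc] vm v holds”, for a polymorphic φ : ∀α. τm → α → bool.
A predicate p is sufficient for φ and M iff p v implies φ[τc] vm v
for all values v of type τc. -/
def Sufficient (M : Module) (φ : Exp → Prop) (p : Exp → Prop) : Prop :=
  ∀ v : Exp, HasType [] v M.τc → p v → φ v

/-- I is a sufficient representation invariant for M w.r.t. φ:
I is sufficient for φ and M, and I ▷ I ⊢ vm : τm ⇝ Valid. -/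
def SuffRepInv (M : Module) (φ : Exp → Prop) (I : Exp → Prop) : Prop :=
  Sufficient M φ I ∧ Cond M.τc M.τm I I M.vm

/-- The set of closed values of a (concrete) type. -/
def ClosedVals (τc : Ty) : Set Exp := {v | v.IsValue ∧ HasType [] v τc}

/-- Result of a verifier call: Valid, or a counterexample value. -/
inductive VResult : Type
  | valid : VResult
  | cex : Exp → VResult

/-- Result of a CondInductive call: Valid, or witness sets (S, V). -/
inductive CIResult : Type
  | valid : CIResult
  | cex : Set Exp → Set Exp → CIResult

/-- Result of ClosedPositives: Valid, or a set V of new positive examples. -/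
inductive CPResult : Type
  | valid : CPResult
  | cex : Set Exp → CPResult

/-- Result of NoNegatives: Valid, or a set S of new negative examples. -/
inductive NNResult : Type
  | valid : NNResult
  | cex : Set Exp → NNResult

/-- Verify is sound: Verify P = Valid implies P v for all values v of type τc. -/
def VerifySound (M : Module) (Vf : (Exp → Prop) → VResult) : Prop :=
  ∀ P : Exp → Prop, Vf P = .valid → ∀ v : Exp, HasType [] v M.τc → P v

/-- Verify is complete: Verify P = v implies v is a value of type τc with ¬ P v. -/
def VerifyComplete (M : Module) (Vf : (Exp → Prop) → VResult) : Prop :=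
  ∀ (P : Exp → Prop) (v : Exp), Vf P = .cex v → HasType [] v M.τc ∧ ¬ P v

/-- Synth is sound: any returned predicate maps every element of V+ to true
and every element of V- to false. -/
def SynthSound (Sy : Set Exp → Set Exp → Option (Exp → Prop)) : Prop :=
  ∀ (Vp Vm : Set Exp) (P : Exp → Prop), Sy Vp Vm = some P →
    (∀ v ∈ Vp, P v) ∧ (∀ v ∈ Vm, ¬ P v)

/-- Synth is complete: whenever a separating predicate exists, Synth returns
some predicate. -/
def SynthComplete (Sy : Set Exp → Set Exp → Option (Exp → Prop)) : Prop :=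
  ∀ Vp Vm : Set Exp,
    (∃ P : Exp → Prop, (∀ v ∈ Vp, P v) ∧ (∀ v ∈ Vm, ¬ P v)) →
    ∃ P : Exp → Prop, Sy Vp Vm = some P

/-- CondInductive P Q returns the result R such that P ▷ Q ⊢ vm : τm ⇝ R. -/
def CICorrect (M : Module) (CI : (Exp → Prop) → (Exp → Prop) → CIResult) : Prop :=
  ∀ P Q : Exp → Prop,
    (CI P Q = .valid → Cond M.τc M.τm P Q M.vm) ∧
    (∀ S V : Set Exp, CI P Q = .cex S V → Refute M.τc P Q M.vm M.τm S V)

/-- ClosedPositives V+ I: Valid if CondInductive V+ I = Valid, and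
CounterExample V if CondInductive V+ I = (S, V). -/
def ClosedPositives (CI : (Exp → Prop) → (Exp → Prop) → CIResult)
    (Vp : Set Exp) (I : Exp → Prop) : CPResult :=
  match CI (fun v => v ∈ Vp) I with
  | .valid => .valid
  | .cex _ V => .cex V

/-- NoNegatives I: first Verify the sufficiency claim for I; on a
counterexample v return CounterExample {v}; otherwise if
CondInductive I I = Valid return Valid, and if CondInductive I I = (S, V)
return CounterExample S. -/
def NoNegatives (φ : Exp → Prop) (Vf : (Exp → Prop) → VResult)
    (CI : (Exp → Prop) → (Exp → Prop) → CIResult) (I : Exp → Prop) : NNResult :=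
  match Vf (fun v => I v → φ v) with
  | .cex v => .cex {v}
  | .valid =>
    match CI I I with
    | .valid => .valid
    | .cex S _ => .cex S

/-- Possible outcomes of the Hanoi algorithm. -/
inductive HanoiResult : Type
  | invariant : (Exp → Prop) → HanoiResult
  | cex : Set Exp → HanoiResult
  | failure : HanoiResult

/-- Big-step semantics of the Hanoi algorithm: `HanoiRun φ Vf Sy CI V+ V- r`
holds iff the call Hanoi V+ V- terminates with result r. -/
inductive HanoiRun (φ : Exp → Prop) (Vf : (Exp → Prop) → VResult)
    (Sy : Set Exp → Set Exp → Option (Exp → Prop))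
    (CI : (Exp → Prop) → (Exp → Prop) → CIResult) :
    Set Exp → Set Exp → HanoiResult → Prop
  | synthFail {Vp Vm : Set Exp} :
      Sy Vp Vm = none → HanoiRun φ Vf Sy CI Vp Vm .failure
  | weaken {Vp Vm P : Set Exp} {I : Exp → Prop} {r : HanoiResult} :
      Sy Vp Vm = some I → ClosedPositives CI Vp I = .cex P →
      HanoiRun φ Vf Sy CI (Vp ∪ P) ∅ r →
      HanoiRun φ Vf Sy CI Vp Vm r
  | specCex {Vp Vm N : Set Exp} {I : Exp → Prop} :
      Sy Vp Vm = some I → ClosedPositives CI Vp I = .valid →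
      NoNegatives φ Vf CI I = .cex N → N \ Vp = ∅ →
      HanoiRun φ Vf Sy CI Vp Vm (.cex N)
  | strengthen {Vp Vm N : Set Exp} {I : Exp → Prop} {r : HanoiResult} :
      Sy Vp Vm = some I → ClosedPositives CI Vp I = .valid →
      NoNegatives φ Vf CI I = .cex N → N \ Vp ≠ ∅ →
      HanoiRun φ Vf Sy CI Vp (Vm ∪ (N \ Vp)) r →
      HanoiRun φ Vf Sy CI Vp Vm r
  | done {Vp Vm : Set Exp} {I : Exp → Prop} :
      Sy Vp Vm = some I → ClosedPositives CI Vp I = .valid →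
      NoNegatives φ Vf CI I = .valid →
      HanoiRun φ Vf Sy CI Vp Vm (.invariant I)

/-- The rank function R(V+, V-) = (|τc| − |V+|, |τc| − |V-|). -/
noncomputable def rank (τc : Ty) (Vp Vm : Set Exp) : Nat × Nat :=
  ((ClosedVals τc).ncard - Vp.ncard, (ClosedVals τc).ncard - Vm.ncard)

/-! A counterexample set returned by `NoNegatives` comes either from `Verify`, whose completeness
makes its single element a value satisfying `I` but violating `φ`, or from the refutation
`I ▷ I ⊢ vm : τm ⇝ (S, V)` produced by `CondInductive`. In a refutation `P ▷ Q ⊢ v : τ ⇝ (S, V)`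
the set `S` only collects the α-components of arguments `v₁` with `Q ▷ P ⊢ v₁ : σ₁ ⇝ Valid`,
and on a 0-order type these components satisfy the second predicate, here `P`. -/

theorem CollectV.forall_of_cond {τc σ : Ty} {P Q : Exp → Prop} {v : Exp} {S : Set Exp}
    (hS : CollectV τc σ v S) (hv : Cond τc σ P Q v) : ∀ x ∈ S, Q x := by
  induction hS with
  | base => simp
  | abs _ =>
    rintro x rfl
    exact hv.2
  | prod _ _ ih₁ ih₂ =>
    obtain ⟨_, _, ⟨⟩, hv₁, hv₂⟩ := hv
    rintro x (hx | hx)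
    exacts [ih₁ hv₁ x hx, ih₂ hv₂ x hx]

theorem Refute.forall_mem_left {τc τ : Ty} {P Q : Exp → Prop} {v : Exp} {S V : Set Exp}
    (h : Refute τc P Q v τ S V) : ∀ x ∈ S, P x := by
  induction h with
  | abs _ _ => simp
  | prodl _ _ ih => exact ih
  | prodr _ _ ih => exact ih
  | fn _ hv₁ _ _ hS₁ ih =>
    rintro x (hx | hx)
    exacts [hS₁.forall_of_cond hv₁ x hx, ih x hx]

section NoNegatives

variable {φ : Exp → Prop} {Vf : (Exp → Prop) → VResult}
  {CI : (Exp → Prop) → (Exp → Prop) → CIResult} {I : Exp → Prop}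

theorem noNegatives_eq_cex {S : Set Exp} (h : NoNegatives φ Vf CI I = .cex S) :
    (∃ v, Vf (fun v => I v → φ v) = .cex v ∧ S = {v}) ∨ ∃ V, CI I I = .cex S V := by
  unfold NoNegatives at h
  rcases hVf : Vf (fun v => I v → φ v) with _ | v
  · rcases hCI : CI I I with _ | ⟨S', V⟩
    · simp only [hVf, hCI, reduceCtorEq] at h
    · simp only [hVf, hCI, NNResult.cex.injEq] at h
      exact Or.inr ⟨V, h ▸ rfl⟩
  · simp only [hVf, NNResult.cex.injEq] at h
    exact Or.inl ⟨v, rfl, h.symm⟩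

theorem noNegatives_eq_valid (h : NoNegatives φ Vf CI I = .valid) : CI I I = .valid := by
  unfold NoNegatives at h
  rcases hVf : Vf (fun v => I v → φ v) with _ | _
  · rcases hCI : CI I I with _ | _ <;> simp_all
  · simp_all

end NoNegatives

theorem noNegatives_sound_and_complete_general (M : Module) (φ : Exp → Prop)
    (Vf : (Exp → Prop) → VResult) (CI : (Exp → Prop) → (Exp → Prop) → CIResult)
    (hVc : VerifyComplete M Vf) (hCI : CICorrect M CI)
    (I : Exp → Prop) :
    (∀ S : Set Exp, NoNegatives φ Vf CI I = .cex S →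
      (S.Nonempty ∧ ∀ v ∈ S, I v ∧ ¬ φ v) ∨
      ((∀ v ∈ S, I v) ∧ ∃ V : Set Exp, Refute M.τc I I M.vm M.τm S V)) ∧
    (NoNegatives φ Vf CI I = .valid → Cond M.τc M.τm I I M.vm) := by
  refine ⟨fun S hS => ?_, fun h => (hCI I I).1 (noNegatives_eq_valid h)⟩
  rcases noNegatives_eq_cex hS with ⟨v, hVf, rfl⟩ | ⟨V, hCIS⟩
  · have hv : ¬(I v → φ v) := (hVc _ v hVf).2
    exact Or.inl ⟨Set.singleton_nonempty v, fun x hx => hx ▸ Classical.not_imp.mp hv⟩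
  · have hRef := (hCI I I).2 S V hCIS
    exact Or.inr ⟨hRef.forall_mem_left, V, hRef⟩

/-- soundness and completeness of NoNegatives, assuming Verify
is sound and complete. -/
theorem noNegatives_sound_and_complete (M : Module) (φ : Exp → Prop)
    (Vf : (Exp → Prop) → VResult) (CI : (Exp → Prop) → (Exp → Prop) → CIResult)
    (hVs : VerifySound M Vf) (hVc : VerifyComplete M Vf) (hCI : CICorrect M CI)
    (I : Exp → Prop) :
    (∀ S : Set Exp, NoNegatives φ Vf CI I = .cex S →
      (S.Nonempty ∧ ∀ v ∈ S, I v ∧ ¬ φ v) ∨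
      ((∀ v ∈ S, I v) ∧ ∃ V : Set Exp, Refute M.τc I I M.vm M.τm S V)) ∧
    (NoNegatives φ Vf CI I = .valid → Cond M.τc M.τm I I M.vm) :=
  noNegatives_sound_and_complete_general M φ Vf CI hVc hCI I

end RepInv
end

section
/- If Verify is sound, then Hanoi ∅ ∅ is sound: whenever the Hanoi algorithm, invoked with empty positive and negative example sets, returns a predicate I, that I is a sufficient representation invariant for module M with respect to specification φ. -/
/-!  Formalization of the core calculus and definitions from
"Data-Driven Inference of Representation Invariants". -/

namespace RepInv

theorem NoNegatives.eq_valid_iff {φ : Exp → Prop} {Vf : (Exp → Prop) → VResult}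
    {CI : (Exp → Prop) → (Exp → Prop) → CIResult} {I : Exp → Prop} :
    NoNegatives φ Vf CI I = .valid ↔ Vf (fun v => I v → φ v) = .valid ∧ CI I I = .valid := by
  unfold NoNegatives
  cases Vf (fun v => I v → φ v) <;> cases CI I I <;> simp

theorem suffRepInv_of_noNegatives_eq_valid {M : Module} {φ : Exp → Prop}
    {Vf : (Exp → Prop) → VResult} {CI : (Exp → Prop) → (Exp → Prop) → CIResult}
    (hVs : VerifySound M Vf) (hCI : CICorrect M CI) {I : Exp → Prop}
    (hNN : NoNegatives φ Vf CI I = .valid) : SuffRepInv M φ I :=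
  have ⟨hVf, hInd⟩ := NoNegatives.eq_valid_iff.mp hNN
  ⟨hVs _ hVf, (hCI I I).1 hInd⟩

theorem HanoiRun.noNegatives_eq_valid {φ : Exp → Prop} {Vf : (Exp → Prop) → VResult}
    {Sy : Set Exp → Set Exp → Option (Exp → Prop)} {CI : (Exp → Prop) → (Exp → Prop) → CIResult}
    {Vp Vm : Set Exp} {I : Exp → Prop} (h : HanoiRun φ Vf Sy CI Vp Vm (.invariant I)) :
    NoNegatives φ Vf CI I = .valid := by
  generalize hr : HanoiResult.invariant I = r at h
  induction h with
  | synthFail _ | specCex _ _ _ _ => cases hr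
  | weaken _ _ _ ih | strengthen _ _ _ _ _ ih => exact ih hr
  | done _ _ hNN => cases hr; exact hNN

/-- if Verify is sound, then Hanoi ∅ ∅ is sound: whenever the
algorithm started from empty example sets returns a predicate I, that I is a
sufficient representation invariant for M with respect to φ. -/
theorem hanoi_sound (M : Module) (φ : Exp → Prop)
    (Vf : (Exp → Prop) → VResult) (Sy : Set Exp → Set Exp → Option (Exp → Prop)) (CI : (Exp → Prop) → (Exp → Prop) → CIResult)
    (hVs : VerifySound M Vf) (hCI : CICorrect M CI)
    (I : Exp → Prop)
    (h : HanoiRun φ Vf Sy CI ∅ ∅ (.invariant I)) :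
    SuffRepInv M φ I :=
  suffRepInv_of_noNegatives_eq_valid hVs hCI h.noNegatives_eq_valid

end RepInv
end
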